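/- Let K be a local field of characteristic (0,p) with valuation ring 𝒪_K, uniformizer ϖ, and a real-valued absolute value |·| with 0 < |ϖ| < 1 and |K^×| = |ϖ|^ℤ. Fix d ≥ 1 and for 0 < ρ < 1 let A_ρ denote the ring of formal power series Σ_i b_i T^i ∈ K⟦T_1,…,T_d⟧ (i ranging over multi-indices, |i| the total degree) such that |b_i| ρ^{|i|} ≤ 1 for all i. Let j ≥ 0 be an integer, let 0 < r < 1, and set M = ⌈(1+j)/log_{|ϖ|}(r)⌉. Then for every s with r^{1/(j+1)} ≤ s < 1 and every integer j' ≥ j, the image of the natural map A_s/ϖ^{j'}A_s → A_r/ϖ^{j}A_r is exactly the 𝒪_K/ϖ^{j}𝒪_K-submodule generated by the classes of the monomials T^i with |i| < M. -/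

import Mathlib

/-- Data exhibiting `L` as a local field of characteristic `(0, p)`: a multiplicative
nonarchimedean absolute value `a` (representing the absolute valuation `v` via
`a x = c ^ v x` for a base `0 < c < 1`), a uniformizer `ϖ` generating the (discrete)
value group, residue characteristic `p` (`a p < 1`), completeness, and perfectness of
the residue field (surjectivity of the `p`-power map on residues). -/
structure LocalFieldData (p : ℕ) (L : Type*) [Field L] where
  a : L → ℝ
  a_zero : a 0 = 0
  a_pos : ∀ x : L, x ≠ 0 → 0 < a x
  a_mul : ∀ x y : L, a (x * y) = a x * a y
  a_add : ∀ x y : L, a (x + y) ≤ max (a x) (a y)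
  ϖ : L
  ϖ_pos : 0 < a ϖ
  ϖ_lt_one : a ϖ < 1
  disc : ∀ x : L, x ≠ 0 → ∃ k : ℤ, a x = a ϖ ^ k
  res_char : a (p : L) < 1
  complete : ∀ u : ℕ → L,
    (∀ ε : ℝ, 0 < ε → ∃ N : ℕ, ∀ m ≥ N, ∀ n ≥ N, a (u m - u n) < ε) →
    ∃ l : L, ∀ ε : ℝ, 0 < ε → ∃ N : ℕ, ∀ n ≥ N, a (u n - l) < ε
  perfect_res : ∀ x : L, a x ≤ 1 → ∃ y : L, a y ≤ 1 ∧ a (x - y ^ p) < 1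


/-!
Write `q = |ϖ|`. Since `r ≤ s ^ (j+1)` and, by the choice of `M`, `q ^ (j+1) < r ^ n` exactly
when `n < M`, a coefficient `b` of degree `n` of an element of `A_s` satisfies:
if `n < M`, then `|b| s ^ n ≤ 1` with `q < s ^ n`, which forces `|b| ≤ 1` because
`|K^×| = q ^ ℤ`; if `n ≥ M`, then `r ^ n ≤ min (s ^ n, q) ^ (j+1) ≤ s ^ n q ^ j`, so
`|b / ϖ ^ j| r ^ n ≤ 1`. Hence every element of `A_s` is an integral polynomial of degree `< M`
plus `ϖ ^ j` times an element of `A_r`; conversely integral series lie in `A_s` as `s ≤ 1`.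
-/

lemma le_mul_pow_of_le_pow_succ {R : Type*} [CommSemiring R] [LinearOrder R] [IsOrderedRing R]
    {u v w : R} {k : ℕ} (hv : 0 ≤ v) (hw : 0 ≤ w) (huv : u ≤ v ^ (k + 1))
    (huw : u ≤ w ^ (k + 1)) : u ≤ v * w ^ k := by
  rcases le_total v w with h | h
  · calc u ≤ v ^ (k + 1) := huv
      _ = v * v ^ k := pow_succ' v k
      _ ≤ v * w ^ k := by gcongr
  · calc u ≤ w ^ (k + 1) := huw
      _ = w * w ^ k := pow_succ' w k
      _ ≤ v * w ^ k := by gcongr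

lemma natCast_lt_ceil_div_logb_iff {q r : ℝ} (hq0 : 0 < q) (hr0 : 0 < r)
    (hr1 : r < 1) (k n : ℕ) : (n : ℤ) < ⌈(k : ℝ) / Real.logb q r⌉ ↔ q ^ k < r ^ n := by
  have hlogr : Real.log r < 0 := Real.log_neg hr0 hr1
  rw [Int.lt_ceil, Int.cast_natCast, Real.logb, div_div_eq_mul_div, lt_div_iff_of_neg hlogr,
    ← Real.log_lt_log_iff (pow_pos hq0 k) (pow_pos hr0 n), Real.log_pow, Real.log_pow]

lemma pow_le_pow_pow_of_le_pow {R : Type*} [CommSemiring R] [PartialOrder R] [IsOrderedRing R]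
    {r s : R} {k : ℕ} (hr : 0 ≤ r) (hrs : r ≤ s ^ k) (n : ℕ) : r ^ n ≤ (s ^ n) ^ k := by
  rw [← pow_mul, mul_comm, pow_mul]
  exact pow_le_pow_left₀ hr hrs n

namespace MvPowerSeries

variable {σ : Type*}

noncomputable def truncDegreeLT {R : Type*} [Semiring R] (M : ℤ) (b : MvPowerSeries σ R) :
    MvPowerSeries σ R :=
  fun i => if (i.degree : ℤ) < M then coeff i b else 0

lemma coeff_truncDegreeLT {R : Type*} [Semiring R] (M : ℤ) (b : MvPowerSeries σ R)
    (i : σ →₀ ℕ) : coeff i (b.truncDegreeLT M) = if (i.degree : ℤ) < M then coeff i b else 0 :=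
  rfl

lemma coeff_truncDegreeLT_of_le {R : Type*} [Semiring R] {M : ℤ} (b : MvPowerSeries σ R)
    {i : σ →₀ ℕ} (h : M ≤ i.degree) : coeff i (b.truncDegreeLT M) = 0 :=
  if_neg h.not_gt

lemma coeff_sub_truncDegreeLT {R : Type*} [Ring R] (M : ℤ) (b : MvPowerSeries σ R)
    (i : σ →₀ ℕ) :
    coeff i (b - b.truncDegreeLT M) = if (i.degree : ℤ) < M then 0 else coeff i b := by
  rw [map_sub, coeff_truncDegreeLT]
  split_ifs <;> simp

end MvPowerSeries

namespace LocalFieldData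

variable {p : ℕ} {K : Type*} [Field K] (D : LocalFieldData p K)

lemma a_nonneg (x : K) : 0 ≤ D.a x := by
  rcases eq_or_ne x 0 with rfl | hx
  · exact D.a_zero.ge
  · exact (D.a_pos x hx).le

def absoluteValue : AbsoluteValue K ℝ where
  toFun := D.a
  map_mul' := D.a_mul
  nonneg' := D.a_nonneg
  eq_zero' x := ⟨fun h => by_contra fun hx => (D.a_pos x hx).ne' h, fun h => h ▸ D.a_zero⟩
  add_le' x y := (D.a_add x y).trans (max_le_add_of_nonneg (D.a_nonneg x) (D.a_nonneg y))

lemma ϖ_ne_zero : D.ϖ ≠ 0 := fun h => D.ϖ_pos.ne' (h ▸ D.a_zero)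

lemma a_div_ϖ_pow (x : K) (j : ℕ) : D.a (x / D.ϖ ^ j) = D.a x / D.a D.ϖ ^ j :=
  (map_div₀ D.absoluteValue x (D.ϖ ^ j)).trans (by rw [map_pow]; rfl)

/-- Discreteness of the value group: a non-integral element has absolute value at least
`|ϖ|⁻¹`. -/
lemma a_le_one_of_mul_le_one {x : K} {t : ℝ} (ht : D.a D.ϖ < t) (hx : D.a x * t ≤ 1) :
    D.a x ≤ 1 := by
  by_contra! hx1
  have hx0 : x ≠ 0 := by rintro rfl; linarith [D.a_zero]
  obtain ⟨k, hk⟩ := D.disc x hx0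
  have hk_neg : k ≤ -1 := by
    by_contra! hk0
    have : D.a D.ϖ ^ k ≤ D.a D.ϖ ^ (0 : ℤ) :=
      zpow_le_zpow_right_of_le_one₀ D.ϖ_pos D.ϖ_lt_one.le hk0
    rw [zpow_zero, ← hk] at this
    linarith
  have hϖx : 1 ≤ D.a x * D.a D.ϖ := by
    have : D.a D.ϖ ^ (-1 : ℤ) ≤ D.a D.ϖ ^ k :=
      zpow_le_zpow_right_of_le_one₀ D.ϖ_pos D.ϖ_lt_one.le hk_neg
    rw [← hk, zpow_neg_one] at this
    exact (inv_le_iff_one_le_mul₀ D.ϖ_pos).mp this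
  nlinarith [D.a_pos x hx0]

lemma a_le_one_of_pow_succ_lt {x : K} {u v : ℝ} {j : ℕ} (hv : 0 ≤ v) (hx : D.a x * v ≤ 1)
    (huv : u ≤ v ^ (j + 1)) (hϖu : D.a D.ϖ ^ (j + 1) < u) : D.a x ≤ 1 :=
  D.a_le_one_of_mul_le_one (lt_of_pow_lt_pow_left₀ (j + 1) hv (hϖu.trans_le huv)) hx

lemma a_div_ϖ_pow_mul_le_one {x : K} {u v : ℝ} {j : ℕ} (hv : 0 ≤ v) (hx : D.a x * v ≤ 1)
    (huv : u ≤ v ^ (j + 1)) (huϖ : u ≤ D.a D.ϖ ^ (j + 1)) : D.a (x / D.ϖ ^ j) * u ≤ 1 := by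
  have hϖj : 0 < D.a D.ϖ ^ j := pow_pos D.ϖ_pos j
  have hu : u ≤ v * D.a D.ϖ ^ j := le_mul_pow_of_le_pow_succ hv D.ϖ_pos.le huv huϖ
  rw [a_div_ϖ_pow, div_mul_eq_mul_div, div_le_one hϖj]
  calc D.a x * u ≤ D.a x * (v * D.a D.ϖ ^ j) := mul_le_mul_of_nonneg_left hu (D.a_nonneg x)
    _ = D.a x * v * D.a D.ϖ ^ j := by ring
    _ ≤ D.a D.ϖ ^ j := by
      simpa using mul_le_mul_of_nonneg_right hx hϖj.le

variable {σ : Type*}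

def powerBounded (ρ : ℝ) : Set (MvPowerSeries σ K) :=
  {b | ∀ i : σ →₀ ℕ, D.a (MvPowerSeries.coeff i b) * ρ ^ i.degree ≤ 1}

lemma add_mem_powerBounded {ρ : ℝ} (hρ : 0 ≤ ρ) {b c : MvPowerSeries σ K}
    (hb : b ∈ D.powerBounded ρ) (hc : c ∈ D.powerBounded ρ) : b + c ∈ D.powerBounded ρ := by
  intro i
  calc D.a (MvPowerSeries.coeff i (b + c)) * ρ ^ i.degree
      ≤ max (D.a (MvPowerSeries.coeff i b)) (D.a (MvPowerSeries.coeff i c)) * ρ ^ i.degree := by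
        rw [map_add]
        exact mul_le_mul_of_nonneg_right (D.a_add _ _) (pow_nonneg hρ _)
    _ ≤ 1 := by
      rw [max_mul_of_nonneg _ _ (pow_nonneg hρ _)]
      exact max_le (hb i) (hc i)

lemma mem_powerBounded_of_a_le_one {ρ : ℝ} (hρ0 : 0 ≤ ρ) (hρ1 : ρ ≤ 1) {c : MvPowerSeries σ K}
    (hc : ∀ i, D.a (MvPowerSeries.coeff i c) ≤ 1) : c ∈ D.powerBounded ρ := fun i =>
  mul_le_one₀ (hc i) (pow_nonneg hρ0 _) (pow_le_one₀ hρ0 hρ1)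

variable {j : ℕ} {r s : ℝ} {M : ℤ}

lemma a_coeff_truncDegreeLT_le_one (hr0 : 0 ≤ r) (hs0 : 0 ≤ s) (hrs : r ≤ s ^ (j + 1))
    (hM : ∀ n : ℕ, (n : ℤ) < M ↔ D.a D.ϖ ^ (j + 1) < r ^ n) {b : MvPowerSeries σ K}
    (hb : b ∈ D.powerBounded s) (i : σ →₀ ℕ) :
    D.a (MvPowerSeries.coeff i (b.truncDegreeLT M)) ≤ 1 := by
  rw [MvPowerSeries.coeff_truncDegreeLT]
  split_ifs with h
  · exact D.a_le_one_of_pow_succ_lt (pow_nonneg hs0 _) (hb i)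
      (pow_le_pow_pow_of_le_pow hr0 hrs _) ((hM _).mp h)
  · rw [D.a_zero]
    exact zero_le_one

lemma ϖ_pow_inv_smul_sub_truncDegreeLT_mem_powerBounded (hr0 : 0 ≤ r) (hs0 : 0 ≤ s)
    (hrs : r ≤ s ^ (j + 1)) (hM : ∀ n : ℕ, (n : ℤ) < M ↔ D.a D.ϖ ^ (j + 1) < r ^ n)
    {b : MvPowerSeries σ K} (hb : b ∈ D.powerBounded s) :
    (D.ϖ ^ j)⁻¹ • (b - b.truncDegreeLT M) ∈ D.powerBounded r := by
  intro i
  rw [MvPowerSeries.coeff_smul, MvPowerSeries.coeff_sub_truncDegreeLT, ← div_eq_inv_mul]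
  split_ifs with h
  · rw [zero_div, D.a_zero, zero_mul]
    exact zero_le_one
  · exact D.a_div_ϖ_pow_mul_le_one (pow_nonneg hs0 _) (hb i)
      (pow_le_pow_pow_of_le_pow hr0 hrs _) (not_lt.mp (mt (hM _).mpr h))

end LocalFieldData

theorem image_of_restriction_map_on_power_bounded_series_general
    (p : ℕ)
    (K : Type*) [Field K] (D : LocalFieldData p K)
    (d : ℕ)
    (j : ℕ) (r : ℝ) (hr0 : 0 < r) (hr1 : r < 1)
    (M : ℤ) (hM : M = ⌈((1 : ℝ) + (j : ℝ)) / Real.logb (D.a D.ϖ) r⌉)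
    (s : ℝ) (hs : r ^ ((1 : ℝ) / ((j : ℝ) + 1)) ≤ s) (hs1 : s < 1) :
    {x : MvPowerSeries (Fin d) K |
        ∃ b : MvPowerSeries (Fin d) K,
          (∀ i : Fin d →₀ ℕ,
            D.a (MvPowerSeries.coeff i b) * s ^ (i.sum fun _ e => e) ≤ 1) ∧
          ∃ c : MvPowerSeries (Fin d) K,
            (∀ i : Fin d →₀ ℕ,
              D.a (MvPowerSeries.coeff i c) * r ^ (i.sum fun _ e => e) ≤ 1) ∧
            x = b + D.ϖ ^ j • c} =
      {x : MvPowerSeries (Fin d) K |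
        ∃ c : MvPowerSeries (Fin d) K,
          (∀ i : Fin d →₀ ℕ,
            D.a (MvPowerSeries.coeff i c) ≤ 1 ∧
              (M ≤ ((i.sum fun _ e => e : ℕ) : ℤ) → MvPowerSeries.coeff i c = 0)) ∧
          ∃ a' : MvPowerSeries (Fin d) K,
            (∀ i : Fin d →₀ ℕ,
              D.a (MvPowerSeries.coeff i a') * r ^ (i.sum fun _ e => e) ≤ 1) ∧
            x = c + D.ϖ ^ j • a'} := by
  have hs0 : 0 ≤ s := (Real.rpow_nonneg hr0.le _).trans hs
  have hrs : r ≤ s ^ (j + 1) := by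
    rw [one_div, Real.rpow_inv_le_iff_of_pos hr0.le hs0 (by positivity)] at hs
    exact_mod_cast hs
  have hM' (n : ℕ) : (n : ℤ) < M ↔ D.a D.ϖ ^ (j + 1) < r ^ n := by
    rw [hM, ← natCast_lt_ceil_div_logb_iff D.ϖ_pos hr0 hr1]
    push_cast
    rw [add_comm]
  ext x
  constructor
  · rintro ⟨b, hb, c, hc, rfl⟩
    refine ⟨b.truncDegreeLT M, fun i => ⟨D.a_coeff_truncDegreeLT_le_one hr0.le hs0 hrs hM' hb i,
      b.coeff_truncDegreeLT_of_le⟩, _, D.add_mem_powerBounded hr0.le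
        (D.ϖ_pow_inv_smul_sub_truncDegreeLT_mem_powerBounded hr0.le hs0 hrs hM' hb) hc, ?_⟩
    rw [smul_add, smul_inv_smul₀ (pow_ne_zero j D.ϖ_ne_zero), ← add_assoc, add_sub_cancel]
  · rintro ⟨c, hc, a', ha', rfl⟩
    exact ⟨c, D.mem_powerBounded_of_a_le_one hs0 hs1.le fun i => (hc i).1, a', ha', rfl⟩

/-- Let `K` be a local field of characteristic `(0,p)` with uniformizer
`ϖ` and absolute value `|·|` with `|K^×| = |ϖ|^ℤ`.  For `0 < ρ < 1` let `A_ρ` be the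
ring of power series `∑ b_i T^i ∈ K⟦T₁,…,T_d⟧` with `|b_i| ρ^{|i|} ≤ 1` for all
multi-indices `i`.  Let `j ≥ 0`, `0 < r < 1`, `M = ⌈(1+j)/log_{|ϖ|}(r)⌉`.  Then for
every `s` with `r^{1/(j+1)} ≤ s < 1` and every `j' ≥ j`, the image of the natural map
`A_s/ϖ^{j'} A_s → A_r/ϖ^j A_r` is exactly the `𝒪_K/ϖ^j 𝒪_K`-submodule generated by the
classes of the monomials `T^i` with `|i| < M`.  (The equality of images is expressed as
an equality of unions of cosets inside `A_r`, i.e. `A_s + ϖ^j A_r` equals the set of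
integral power series supported in degrees `< M` plus `ϖ^j A_r`.) -/
theorem image_of_restriction_map_on_power_bounded_series
    (p : ℕ) (hp : p.Prime)
    (K : Type*) [Field K] [CharZero K] (D : LocalFieldData p K)
    (d : ℕ) (hd : 1 ≤ d)
    (j : ℕ) (r : ℝ) (hr0 : 0 < r) (hr1 : r < 1)
    (M : ℤ) (hM : M = ⌈((1 : ℝ) + (j : ℝ)) / Real.logb (D.a D.ϖ) r⌉)
    (s : ℝ) (hs : r ^ ((1 : ℝ) / ((j : ℝ) + 1)) ≤ s) (hs1 : s < 1)
    (j' : ℕ) (hj' : j ≤ j') :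
    {x : MvPowerSeries (Fin d) K |
        ∃ b : MvPowerSeries (Fin d) K,
          (∀ i : Fin d →₀ ℕ,
            D.a (MvPowerSeries.coeff i b) * s ^ (i.sum fun _ e => e) ≤ 1) ∧
          ∃ c : MvPowerSeries (Fin d) K,
            (∀ i : Fin d →₀ ℕ,
              D.a (MvPowerSeries.coeff i c) * r ^ (i.sum fun _ e => e) ≤ 1) ∧
            x = b + D.ϖ ^ j • c} =
      {x : MvPowerSeries (Fin d) K |
        ∃ c : MvPowerSeries (Fin d) K,
          (∀ i : Fin d →₀ ℕ,
            D.a (MvPowerSeries.coeff i c) ≤ 1 ∧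
              (M ≤ ((i.sum fun _ e => e : ℕ) : ℤ) → MvPowerSeries.coeff i c = 0)) ∧
          ∃ a' : MvPowerSeries (Fin d) K,
            (∀ i : Fin d →₀ ℕ,
              D.a (MvPowerSeries.coeff i a') * r ^ (i.sum fun _ e => e) ≤ 1) ∧
            x = c + D.ϖ ^ j • a'} :=
  image_of_restriction_map_on_power_bounded_series_general p K D d j r hr0 hr1 M hM s hs hs1
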